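/- Let R be a commutative Noetherian local ring and M ≠ 0, N finitely generated R-modules such that M ⊗_R N ≅ M^{⊕μ(N)}. If Tor_1^R(M, N) = 0, then N is a free R-module. -/

import Mathlib

/-!
Choose a surjection `f : R^μ → N` with `μ = μ(N)` and kernel `K`. Since `Tor₁(M, N) = 0`, and
`Tor₁` can be read off any projective presentation of `N`, `M ⊗ K → M ⊗ R^μ` is injective. The composite `M ⊗ R^μ → M ⊗ N ≅ M^μ ≅ M ⊗ R^μ` is a surjective
endomorphism of a finitely generated module, hence injective, so `M ⊗ K → M ⊗ R^μ` is also zero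
and `M ⊗ K = 0`. Nakayama's lemma (tensoring with the residue field) then gives `K = 0`, so `f`
is an isomorphism.
-/

open CategoryTheory TensorProduct

universe u

/-- The minimal number of generators of an `R`-module `M`. -/
noncomputable def minGens (R : Type*) [Semiring R] (M : Type*) [AddCommMonoid M]
    [Module R M] : ℕ :=
  sInf {n : ℕ | ∃ f : (Fin n → R) →ₗ[R] M, Function.Surjective f}

open LinearMap Function

theorem exists_surjective_fin_minGens (R : Type*) [Semiring R] (N : Type*) [AddCommMonoid N]
    [Module R N] [Module.Finite R N] :
    ∃ f : (Fin (minGens R N) → R) →ₗ[R] N, Surjective f :=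
  Nat.sInf_mem (Module.Finite.exists_fin' R N)

section

variable {R : Type*} [CommRing R] {M : Type*} [AddCommGroup M] [Module R M]

theorem lTensor_range_subtype_injective_of_ker_le_range {P₀ P₁ P₂ : Type*}
    [AddCommGroup P₀] [Module R P₀] [AddCommGroup P₁] [Module R P₁]
    [AddCommGroup P₂] [Module R P₂] (d₁ : P₁ →ₗ[R] P₀) (d₂ : P₂ →ₗ[R] P₁)
    (hd : d₁ ∘ₗ d₂ = 0) (hM : ker (d₁.lTensor M) ≤ range (d₂.lTensor M)) :
    Injective ((range d₁).subtype.lTensor M) := by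
  rw [injective_iff_map_eq_zero]
  intro x hx
  obtain ⟨y, rfl⟩ := lTensor_surjective M d₁.surjective_rangeRestrict x
  obtain ⟨z, rfl⟩ := hM (show y ∈ ker (d₁.lTensor M) by
    rwa [mem_ker, ← subtype_comp_codRestrict d₁ (range d₁) (mem_range_self d₁), lTensor_comp,
      LinearMap.comp_apply])
  have hd' : d₁.rangeRestrict ∘ₗ d₂ = 0 := by
    ext v
    simpa using LinearMap.congr_fun hd v
  rw [← LinearMap.comp_apply, ← lTensor_comp, hd', lTensor_zero, LinearMap.zero_apply]

theorem lTensor_ker_subtype_injective_of_projective {F P N : Type*}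
    [AddCommGroup F] [Module R F] [AddCommGroup P] [Module R P] [AddCommGroup N] [Module R N]
    [Module.Projective R F] [Module.Projective R P]
    {f : F →ₗ[R] N} {π : P →ₗ[R] N} (hf : Surjective f) (hπ : Surjective π)
    (hinj : Injective ((ker π).subtype.lTensor M)) :
    Injective ((ker f).subtype.lTensor M) := by
  obtain ⟨α, hα⟩ := Module.projective_lifting_property π f hπ
  obtain ⟨β, hβ⟩ := Module.projective_lifting_property f π hf
  let α' : ker f →ₗ[R] ker π := α.restrict fun v hv => by
    rw [mem_ker, ← LinearMap.comp_apply, hα]; exact hv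
  let β' : ker π →ₗ[R] ker f := β.restrict fun v hv => by
    rw [mem_ker, ← LinearMap.comp_apply, hβ]; exact hv
  -- `β ∘ α` lifts `f` along itself, so it differs from the identity by a map into `ker f`.
  have hfβα : f ∘ₗ β ∘ₗ α = f := by rw [← LinearMap.comp_assoc, hβ, hα]
  let γ : F →ₗ[R] ker f := (β ∘ₗ α - LinearMap.id).codRestrict _ fun v => by
    simpa [sub_eq_zero] using LinearMap.congr_fun hfβα v
  have hβα : β' ∘ₗ α' = LinearMap.id + γ ∘ₗ (ker f).subtype := by
    ext v
    simp [α', β', γ]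
  rw [injective_iff_map_eq_zero]
  intro x hx
  have hαx : α'.lTensor M x = 0 := hinj <| by
    rw [← LinearMap.comp_apply, ← lTensor_comp, show (ker π).subtype ∘ₗ α' = α ∘ₗ (ker f).subtype
      from rfl, lTensor_comp, LinearMap.comp_apply, hx, map_zero, map_zero]
  calc x = (β' ∘ₗ α').lTensor M x - (γ ∘ₗ (ker f).subtype).lTensor M x := by
        rw [hβα, lTensor_add, lTensor_id, LinearMap.add_apply, LinearMap.id_apply,
          add_sub_cancel_right]
    _ = 0 := by
        rw [lTensor_comp, lTensor_comp, LinearMap.comp_apply, LinearMap.comp_apply, hαx, hx,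
          map_zero, map_zero, sub_zero]

theorem lTensor_injective_of_surjective_of_linearEquiv {P N : Type*}
    [AddCommGroup P] [Module R P] [AddCommGroup N] [Module R N] [Module.Finite R (M ⊗[R] P)]
    {f : P →ₗ[R] N} (hf : Surjective f) (e : M ⊗[R] N ≃ₗ[R] M ⊗[R] P) :
    Injective (f.lTensor M) :=
  .of_comp <| OrzechProperty.injective_of_surjective_endomorphism (e.toLinearMap ∘ₗ f.lTensor M)
    (e.surjective.comp (lTensor_surjective M hf))

theorem subsingleton_tensorProduct_ker_of_lTensor_injective {P N : Type*}
    [AddCommGroup P] [Module R P] [AddCommGroup N] [Module R N] {f : P →ₗ[R] N}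
    (hf : Injective (f.lTensor M)) (hker : Injective ((ker f).subtype.lTensor M)) :
    Subsingleton (M ⊗[R] ker f) := by
  refine subsingleton_of_forall_eq 0 fun x => hf.comp hker ?_
  simp only [comp_apply, map_zero, ← LinearMap.comp_apply, ← lTensor_comp, comp_ker_subtype,
    lTensor_zero, LinearMap.zero_apply]

theorem subsingleton_of_subsingleton_tensorProduct [IsLocalRing R] {K : Type*} [AddCommGroup K]
    [Module R K] [Module.Finite R M] [Nontrivial M] [Module.Finite R K]
    (h : Subsingleton (M ⊗[R] K)) : Subsingleton K := by
  let k := IsLocalRing.ResidueField R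
  by_contra hK
  rw [not_subsingleton_iff_nontrivial] at hK
  have hkM : Nontrivial (k ⊗[R] M) := by
    rw [← not_subsingleton_iff_nontrivial, IsLocalRing.subsingleton_tensorProduct]
    exact not_subsingleton M
  have hkK : Nontrivial (k ⊗[R] K) := by
    rw [← not_subsingleton_iff_nontrivial, IsLocalRing.subsingleton_tensorProduct]
    exact not_subsingleton K
  obtain ⟨w, hw⟩ := exists_ne (0 : k ⊗[R] K)
  have : Nontrivial ((k ⊗[R] M) ⊗[k] (k ⊗[R] K)) :=
    nontrivial_of_linearMap_injective_of_flat_left k _ _ (toSpanSingleton k _ w)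
      (smul_left_injective k hw)
  have : Nontrivial (k ⊗[R] (M ⊗[R] K)) :=
    (AlgebraTensorModule.distribBaseChange R k M K).symm.injective.nontrivial
  exact not_subsingleton (k ⊗[R] (M ⊗[R] K)) inferInstance

end

section Tor

variable {R : Type u} [CommRing R] {M N : Type u} [AddCommGroup M] [Module R M]
  [AddCommGroup N] [Module R N]

theorem ker_lTensor_le_range_of_subsingleton_tor (P : ProjectiveResolution (ModuleCat.of R N))
    (htor : Subsingleton (((Tor (ModuleCat.{u} R) 1).obj (ModuleCat.of R M)).obj
      (ModuleCat.of R N))) :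
    ker ((P.complex.d 1 0).hom.lTensor M) ≤ range ((P.complex.d 2 1).hom.lTensor M) := by
  let T := MonoidalCategory.tensorLeft (ModuleCat.of R M)
  have : Subsingleton ((T.leftDerived 1).obj (ModuleCat.of R N)) := htor
  have hzero : Limits.IsZero ((T.mapHomologicalComplex _).obj P.complex |>.homology 1) :=
    (ModuleCat.isZero_of_subsingleton _).of_iso (P.isoLeftDerivedObj T 1).symm
  have hexact := (HomologicalComplex.exactAt_iff_isZero_homology _ _).2 hzero
  rw [HomologicalComplex.exactAt_iff' _ 2 1 0 (by simp) (by simp),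
    ShortComplex.moduleCat_exact_iff_ker_sub_range] at hexact
  exact hexact

theorem lTensor_ker_subtype_injective_of_subsingleton_tor {F : Type u} [AddCommGroup F]
    [Module R F] [Module.Projective R F] {f : F →ₗ[R] N} (hf : Surjective f)
    (htor : Subsingleton (((Tor (ModuleCat.{u} R) 1).obj (ModuleCat.of R M)).obj
      (ModuleCat.of R N))) :
    Injective ((ker f).subtype.lTensor M) := by
  obtain ⟨P⟩ := HasProjectiveResolution.out (Z := ModuleCat.of R N)
  have : Module.Projective R (P.complex.X 0) :=
    (IsProjective.iff_projective (P.complex.X 0)).2 (P.projective 0)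
  let π : P.complex.X 0 →ₗ[R] N := (P.π.f 0).hom
  have hπ : Surjective π := (ModuleCat.epi_iff_surjective (P.π.f 0)).1 inferInstance
  have hrange : range (P.complex.d 1 0).hom = ker π := by
    refine le_antisymm ?_ ?_
    · rintro _ ⟨y, rfl⟩
      exact LinearMap.congr_fun (congrArg ModuleCat.Hom.hom P.complex_d_comp_π_f_zero) y
    · exact (ShortComplex.moduleCat_exact_iff_ker_sub_range _).1 P.exact₀
  refine lTensor_ker_subtype_injective_of_projective hf hπ ?_
  rw [← hrange]
  exact lTensor_range_subtype_injective_of_ker_le_range _ _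
    (congrArg ModuleCat.Hom.hom (P.complex.d_comp_d 2 1 0))
    (ker_lTensor_le_range_of_subsingleton_tor P htor)

end Tor

/-- Let `R` be a commutative Noetherian local ring and `M ≠ 0`, `N` finitely generated
`R`-modules such that `M ⊗_R N ≅ M^{μ(N)}`.  If `Tor₁(M, N) = 0`, then `N` is free. -/
theorem stmt4 {R : Type u} [CommRing R] [IsNoetherianRing R] [IsLocalRing R]
    {M N : Type u} [AddCommGroup M] [Module R M] [Module.Finite R M] [Nontrivial M]
    [AddCommGroup N] [Module R N] [Module.Finite R N]
    (h : Nonempty ((M ⊗[R] N) ≃ₗ[R] (Fin (minGens R N) → M)))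
    (htor : Subsingleton (((Tor (ModuleCat.{u} R) 1).obj (ModuleCat.of R M)).obj
      (ModuleCat.of R N))) :
    Module.Free R N := by
  obtain ⟨e⟩ := h
  obtain ⟨f, hf⟩ := exists_surjective_fin_minGens R N
  have hfM : Injective (f.lTensor M) :=
    lTensor_injective_of_surjective_of_linearEquiv hf (e ≪≫ₗ (piScalarRight R R M _).symm)
  have hMK : Subsingleton (M ⊗[R] ker f) := subsingleton_tensorProduct_ker_of_lTensor_injective hfM
    (lTensor_ker_subtype_injective_of_subsingleton_tor hf htor)
  have hK : ker f = ⊥ :=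
    Submodule.subsingleton_iff_eq_bot.1 (subsingleton_of_subsingleton_tensorProduct hMK)
  exact .of_equiv (.ofBijective f ⟨ker_eq_bot.1 hK, hf⟩)
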